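/- arXiv:2502.16338 — 3 statements merged into one kernel-verified Lean document; each statement's English description precedes it below -/
import Mathlib

section
/- For all integers t ≥ 1 and a ≥ 2, the polynomial f(X) = X^3 + a^2(a^3-2)X^2 - a(a^3-1)X + 1 + tX(aX-1), viewed as a polynomial over ℚ, is irreducible. -/
open Polynomial

/-- For all integers `t ≥ 1` and `a ≥ 2`, the polynomial
`f(X) = X^3 + a^2(a^3-2)X^2 - a(a^3-1)X + 1 + tX(aX-1)`, viewed over `ℚ`,
is irreducible. -/
theorem stmt_1 (t a : ℤ) (ht : 1 ≤ t) (ha : 2 ≤ a) :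
    Irreducible ((X ^ 3 + C ((a : ℚ) ^ 2 * ((a : ℚ) ^ 3 - 2)) * X ^ 2
      - C ((a : ℚ) * ((a : ℚ) ^ 3 - 1)) * X + 1
      + C (t : ℚ) * X * (C (a : ℚ) * X - 1) : Polynomial ℚ)) := by
  set P : ℤ[X] := X ^ 3 + C (a ^ 2 * (a ^ 3 - 2)) * X ^ 2
      - C (a * (a ^ 3 - 1)) * X + 1 + C t * X * (C a * X - 1) with hP
  have hmap : P.map (algebraMap ℤ ℚ) = (X ^ 3 + C ((a : ℚ) ^ 2 * ((a : ℚ) ^ 3 - 2)) * X ^ 2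
      - C ((a : ℚ) * ((a : ℚ) ^ 3 - 1)) * X + 1
      + C (t : ℚ) * X * (C (a : ℚ) * X - 1) : Polynomial ℚ) := by
    have h2 : (C (2:ℚ) : ℚ[X]) = 2 := map_ofNat C 2
    simp only [hP, h2, Polynomial.map_add, Polynomial.map_sub, Polynomial.map_mul,
      Polynomial.map_pow, Polynomial.map_one, map_X, map_C, eq_intCast,
      Int.cast_mul, Int.cast_sub, Int.cast_pow, Int.cast_one, Int.cast_ofNat,
      Polynomial.map_intCast, Polynomial.map_ofNat, C_mul, C_sub, C_pow, C_add, C_neg,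
      C_1, C_eq_intCast]
  rw [← hmap]
  have hPform : P = X ^ 3 + C (a ^ 2 * (a ^ 3 - 2) + t * a) * X ^ 2
      + C (-(a * (a ^ 3 - 1)) - t) * X + C 1 := by
    rw [hP]; simp only [C_add, C_mul, C_sub, C_neg, C_1]; ring
  have hPmonic : P.Monic := by
    rw [hPform]; monicity!
  have hdeg : P.natDegree = 3 := by
    rw [hPform]; compute_degree!
  have hcoeff0 : P.coeff 0 = 1 := by
    simp [hP, coeff_one]
  have hdegQ : (P.map (algebraMap ℤ ℚ)).natDegree = 3 := by
    rw [natDegree_map_eq_of_injective (algebraMap ℤ ℚ).injective_int, hdeg]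
  rw [irreducible_iff_roots_eq_zero_of_degree_le_three (by omega) (by omega)]
  rw [Multiset.eq_zero_iff_forall_notMem]
  intro r hr
  have hne : P.map (algebraMap ℤ ℚ) ≠ 0 := by
    intro h
    rw [h] at hdegQ
    simp at hdegQ
  rw [mem_roots hne, IsRoot, eval_map, ← aeval_def] at hr
  obtain ⟨r', hr'eq, hr'dvd⟩ := exists_integer_of_is_root_of_monic hPmonic hr
  rw [hcoeff0] at hr'dvd
  have hunit : r' = 1 ∨ r' = -1 := Int.isUnit_iff.mp (isUnit_of_dvd_one hr'dvd)
  have heval : P.eval r' = 0 := by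
    have h2 : ((P.eval r' : ℤ) : ℚ) = 0 := by
      rw [hr'eq, aeval_algebraMap_apply_eq_algebraMap_eval] at hr
      simpa using hr
    exact_mod_cast h2
  have hev : ∀ x : ℤ, P.eval x = x ^ 3 + (a ^ 2 * (a ^ 3 - 2)) * x ^ 2
      - (a * (a ^ 3 - 1)) * x + 1 + t * x * (a * x - 1) := by
    intro x; simp [hP]
  rcases hunit with h1 | h1
  · rw [h1, hev 1] at heval
    nlinarith [sq_nonneg a, sq_nonneg (a - 1), sq_nonneg (a ^ 2 - a)]
  · rw [h1, hev (-1)] at heval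
    nlinarith [sq_nonneg a, sq_nonneg (a + 1), sq_nonneg (a ^ 2 + a)]
end

section
/- Let a,b be coprime nonzero integers with a^3 ≡ 1 (mod b) and b^3 ≡ 1 (mod a), let t be an integer, and let θ be a root (in a field extension of ℚ) of the polynomial f_{a,b,t}(X) = X^3 + ((a^3-1)^2-b^3)/(ab^2) · X^2 - a(a^3-1)/b · X + 1 + tX(aX - b), assumed irreducible over ℚ. Then θ and aθ - b are units in the ring ℤ[θ]. -/
open Polynomial

/-- Let `(a,b)` be a mutually cubic pair of coprime nonzero integers, `t ∈ ℤ`, and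
let `θ` in a field extension `K` of `ℚ` be a root of the polynomial
`f_{a,b,t}(X) = X^3 + ((a^3-1)^2-b^3)/(ab^2) X^2 - a(a^3-1)/b X + 1 + tX(aX-b)`,
assumed irreducible over `ℚ`.  Then `θ` and `aθ - b` are units in the ring `ℤ[θ]`. -/
theorem stmt_4 (a b t : ℤ) (ha : a ≠ 0) (hb : b ≠ 0) (hcop : IsCoprime a b)
    (h₁ : a ^ 3 ≡ 1 [ZMOD b]) (h₂ : b ^ 3 ≡ 1 [ZMOD a])
    (K : Type*) [Field K] [Algebra ℚ K] (θ : K)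
    (p : Polynomial ℚ)
    (hp : p = X ^ 3 + C ((((a : ℚ) ^ 3 - 1) ^ 2 - (b : ℚ) ^ 3) / ((a : ℚ) * (b : ℚ) ^ 2)) * X ^ 2
      - C ((a : ℚ) * ((a : ℚ) ^ 3 - 1) / (b : ℚ)) * X + 1
      + C (t : ℚ) * X * (C (a : ℚ) * X - C (b : ℚ)))
    (hirr : Irreducible p) (hroot : Polynomial.aeval θ p = 0) :
    (θ ∈ Algebra.adjoin ℤ ({θ} : Set K) ∧
      ∃ x ∈ Algebra.adjoin ℤ ({θ} : Set K), θ * x = 1) ∧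
    ((a : K) * θ - (b : K) ∈ Algebra.adjoin ℤ ({θ} : Set K) ∧
      ∃ y ∈ Algebra.adjoin ℤ ({θ} : Set K), ((a : K) * θ - (b : K)) * y = 1) := by
  -- extract divisibilities
  have hdvd1 : b ∣ a ^ 3 - 1 := dvd_sub_comm.mp h₁.dvd
  have hdvd2 : a ∣ b ^ 3 - 1 := dvd_sub_comm.mp h₂.dvd
  obtain ⟨c, hc⟩ := hdvd1
  -- a ∣ c^2 - b
  have hab : a ∣ c ^ 2 - b := by
    have h3 : a ∣ b ^ 2 * (c ^ 2 - b) := by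
      have : b ^ 2 * (c ^ 2 - b) = (a ^ 3 - 1) ^ 2 - b ^ 3 := by rw [hc]; ring
      rw [this]
      have h4 : a ∣ (a ^ 3 - 1) ^ 2 - 1 := ⟨a ^ 5 - 2 * a ^ 2, by ring⟩
      have : (a ^ 3 - 1) ^ 2 - b ^ 3 = ((a ^ 3 - 1) ^ 2 - 1) - (b ^ 3 - 1) := by ring
      rw [this]; exact dvd_sub h4 hdvd2
    exact (hcop.pow_right).dvd_of_dvd_mul_left h3
  obtain ⟨k, hk⟩ := hab
  -- key integer identities
  have hK1 : (a ^ 3 - 1) ^ 2 - b ^ 3 = a * b ^ 2 * k := by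
    have : (a ^ 3 - 1) ^ 2 - b ^ 3 = b ^ 2 * (c ^ 2 - b) := by rw [hc]; ring
    rw [this, hk]; ring
  have hK2 : a * (a ^ 3 - 1) = b * (a * c) := by rw [hc]; ring
  -- rewrite the rational coefficients as integers
  have haQ : (a : ℚ) ≠ 0 := Int.cast_ne_zero.mpr ha
  have hbQ : (b : ℚ) ≠ 0 := Int.cast_ne_zero.mpr hb
  have hc1 : (((a : ℚ) ^ 3 - 1) ^ 2 - (b : ℚ) ^ 3) / ((a : ℚ) * (b : ℚ) ^ 2) = ((k : ℤ) : ℚ) := by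
    rw [div_eq_iff (mul_ne_zero haQ (pow_ne_zero 2 hbQ)), mul_comm]
    exact_mod_cast hK1
  have hc2 : (a : ℚ) * ((a : ℚ) ^ 3 - 1) / (b : ℚ) = ((a * c : ℤ) : ℚ) := by
    rw [div_eq_iff hbQ, mul_comm ((a * c : ℤ) : ℚ)]
    exact_mod_cast hK2
  rw [hp, hc1, hc2] at hroot
  simp only [map_add, map_sub, map_mul, map_pow, map_one, aeval_X, aeval_C, map_intCast] at hroot
  -- hroot : θ ^ 3 + k * θ ^ 2 - (a*c) * θ + 1 + t * θ * (a * θ - b) = 0  (all ℤ-casts)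
  set m : ℤ := a * c with hm
  have hθ : θ ∈ Algebra.adjoin ℤ ({θ} : Set K) := Algebra.self_mem_adjoin_singleton ℤ θ
  have hint : ∀ n : ℤ, (n : K) ∈ Algebra.adjoin ℤ ({θ} : Set K) := fun n =>
    Subalgebra.intCast_mem _ n
  refine ⟨⟨hθ, ⟨-(θ ^ 2 + ((k + t * a : ℤ) : K) * θ - ((m + t * b : ℤ) : K)), ?_, ?_⟩⟩,
    ⟨?_, ⟨-(((a ^ 2 : ℤ) : K) * θ ^ 2 + ((a * (b + a * (k + t * a)) : ℤ) : K) * θ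
      + ((b ^ 2 + a * b * (k + t * a) - a ^ 2 * (m + t * b) : ℤ) : K)), ?_, ?_⟩⟩⟩
  · exact neg_mem (sub_mem (add_mem (pow_mem hθ 2) (mul_mem (hint _) hθ)) (hint _))
  · push_cast
    push_cast at hroot
    linear_combination -hroot
  · exact sub_mem (mul_mem (hint a) hθ) (hint b)
  · exact neg_mem (add_mem (add_mem (mul_mem (hint _) (pow_mem hθ 2)) (mul_mem (hint _) hθ)) (hint _))
  · push_cast
    push_cast at hroot
    have hK1' : ((a : K) ^ 3 - 1) ^ 2 - (b : K) ^ 3 = (a : K) * (b : K) ^ 2 * (k : K) := by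
      exact_mod_cast congrArg (Int.cast : ℤ → K) hK1
    have hK2' : (a : K) * ((a : K) ^ 3 - 1) = (b : K) * ((a : K) * (c : K)) := by
      exact_mod_cast congrArg (Int.cast : ℤ → K) hK2
    have hmK : (m : K) = (a : K) * (c : K) := by push_cast [hm]; ring
    rw [hmK] at hroot ⊢
    linear_combination (-(a : K) ^ 3) * hroot - hK1' + (a : K) ^ 2 * hK2'
end

section
/- Let 0 < α < 1/4 be real, k a positive integer with k ≤ 1/α - 3, and a_t a sequence of integers with 1 ≤ a_t ≤ t^α. There exists A' > 0 depending only on α and k such that for all t with a_t ≥ A', the polynomial f_t(X) = X^3 + a_t^2(a_t^3 - 2)X^2 - a_t(a_t^3-1)X + 1 + tX(a_tX - 1) has a real root θ with 0 < θ ≤ a_t^{-k}. -/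
-- k = 1 case
set_option maxHeartbeats 1000000 in
lemma aux1 (A T : ℝ) (hA : 4 ≤ A) (hT : A^4 ≤ T)
    (s x : ℝ) (hs : s = 1 - 1/T) (hx : x = s/A) :
    x^3 + A^2*(A^3-2)*x^2 - A*(A^3-1)*x + 1 + T*x*(A*x-1) < 0 := by
  have hA0 : (0:ℝ) < A := by linarith
  have h256 : (256:ℝ) ≤ A^4 := by
    have := pow_le_pow_left₀ (by norm_num : (0:ℝ) ≤ 4) hA 4
    norm_num at this; linarith
  have hT0 : (0:ℝ) < T := by linarith
  have hT2 : (2:ℝ) ≤ T := by linarith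
  have hs2 : (1:ℝ)/2 ≤ s := by
    rw [hs]
    have : 1/T ≤ 1/2 := by rw [div_le_div_iff₀ hT0 (by norm_num)]; linarith
    linarith
  have hs1 : s < 1 := by
    rw [hs]
    have : 0 < 1/T := by positivity
    linarith
  have hs0 : 0 < s := by linarith
  have key : x^3 + A^2*(A^3-2)*x^2 - A*(A^3-1)*x + 1 + T*x*(A*x-1)
      = s^3/A^3 - A^3*s/T + (1-s)*(2*s+1) - s/A := by
    subst hx
    have h1s : (1:ℝ)-s = 1/T := by rw [hs]; ring
    rw [h1s, hs]
    field_simp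
    ring
  rw [key]
  have hs3 : s^3 ≤ 1 := by nlinarith [mul_nonneg (mul_nonneg hs0.le hs0.le) (by linarith : (0:ℝ) ≤ 1 - s)]
  have b1 : s^3/A^3 ≤ 1/A^3 := by
    apply div_le_div_of_nonneg_right hs3 (by positivity)
  have b2 : -(A^3*s/T) ≤ 0 := by
    have : 0 ≤ A^3*s/T := by positivity
    linarith
  have b3 : (1-s)*(2*s+1) ≤ 3/T := by
    have h1s : (1:ℝ)-s = 1/T := by rw [hs]; ring
    rw [h1s, div_mul_eq_mul_div, div_le_div_iff₀ hT0 hT0]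
    nlinarith
  have b4 : 3/T ≤ 3/A^4 := by
    apply div_le_div_of_nonneg_left (by norm_num) (by positivity) hT
  have b5 : -(s/A) ≤ -(1/(2*A)) := by
    rw [neg_le_neg_iff, div_le_div_iff₀ (by positivity) hA0]
    nlinarith
  have b6 : 1/A^3 + 3/A^4 < 1/(2*A) := by
    rw [div_add_div _ _ (by positivity) (by positivity),
      div_lt_div_iff₀ (by positivity) (by positivity)]
    have h3 : 16*A ≤ A^3 := by
      nlinarith [mul_nonneg (mul_nonneg hA0.le (by linarith : (0:ℝ) ≤ A - 4)) (by linarith : (0:ℝ) ≤ A+4)]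
    have h4 : 16*A^5 ≤ A^7 := by
      have h := mul_le_mul_of_nonneg_left h3 (pow_pos hA0 4).le
      calc 16*A^5 = A^4*(16*A) := by ring
        _ ≤ A^4*A^3 := h
        _ = A^7 := by ring
    have h5 : 4*A^4 ≤ A^5 := by
      have h := mul_le_mul_of_nonneg_left hA (pow_pos hA0 4).le
      calc 4*A^4 = A^4*4 := by ring
        _ ≤ A^4*A := h
        _ = A^5 := by ring
    nlinarith [pow_pos hA0 5]
  linarith

-- k ≥ 2 case
set_option maxHeartbeats 1000000 in
lemma aux2 (A B T : ℝ) (hA : 4 ≤ A) (hB : A^2 ≤ B) (hT : A^3*B ≤ T)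
    (s x : ℝ) (hs : s = 1 - 1/T) (hx : x = s/B) :
    x^3 + A^2*(A^3-2)*x^2 - A*(A^3-1)*x + 1 + T*x*(A*x-1) < 0 := by
  have hA0 : (0:ℝ) < A := by linarith
  have hB0 : (0:ℝ) < B := by nlinarith
  have hB16 : (16:ℝ) ≤ B := by nlinarith
  have hT0 : (0:ℝ) < T := by nlinarith [pow_pos hA0 3]
  have hT2 : (2:ℝ) ≤ T := by nlinarith [pow_pos hA0 3]
  have hs2 : (1:ℝ)/2 ≤ s := by
    rw [hs]
    have : 1/T ≤ 1/2 := by rw [div_le_div_iff₀ hT0 (by norm_num)]; linarith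
    linarith
  have hs1 : s < 1 := by
    rw [hs]
    have : 0 < 1/T := by positivity
    linarith
  have hs0 : 0 < s := by linarith
  have hx0 : 0 < x := by rw [hx]; positivity
  have hxB : x * B ≤ 1 := by rw [hx]; field_simp; linarith
  have hx2 : x ≤ 1/A^2 := by
    rw [le_div_iff₀ (by positivity)]
    nlinarith [mul_le_mul_of_nonneg_left hB hx0.le]
  have hx1 : x ≤ 1 := by nlinarith
  have hAx : A * x ≤ 1/4 := by
    have : A * x ≤ A / A^2 := by
      rw [le_div_iff₀ (by positivity)]
      nlinarith [mul_le_mul_of_nonneg_left hB (mul_pos hA0 hx0).le, mul_le_mul_of_nonneg_left hB hx0.le]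
    have h2 : A / A^2 ≤ 1/4 := by
      rw [div_le_div_iff₀ (by positivity) (by norm_num)]
      nlinarith
    linarith
  have hTx : A^3/2 ≤ T * x := by
    have h1 : A^3 * s ≤ T * x := by
      rw [hx]
      have e : A^3*B*(s/B) = A^3*s := by field_simp
      calc A^3*s = A^3*B*(s/B) := e.symm
        _ ≤ T*(s/B) := by
            apply mul_le_mul_of_nonneg_right hT (by positivity)
    nlinarith [pow_pos hA0 3]
  have hterm : T * x * (A * x - 1) ≤ -(3/8) * A^3 := by
    have h1 : A * x - 1 ≤ -(3/4) := by linarith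
    have h2 : 0 < T * x := by positivity
    nlinarith [pow_pos hA0 3]
  have hcube : x^3 ≤ 1 := pow_le_one₀ hx0.le hx1
  have hquad : A^2 * (A^3-2) * x^2 ≤ A := by
    have hxA : x * A^2 ≤ 1 := (le_div_iff₀ (pow_pos hA0 2)).mp hx2
    have h1 : x^2 * A^4 ≤ 1 := by
      nlinarith [hxA, mul_nonneg hx0.le (pow_pos hA0 2).le]
    nlinarith [mul_le_mul_of_nonneg_left h1 hA0.le, mul_nonneg (sq_nonneg x) (sq_nonneg A)]
  have hA64 : (64:ℝ) ≤ A^3 := by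
    nlinarith [mul_nonneg (by linarith : (0:ℝ) ≤ A - 4) (sq_nonneg A), sq_nonneg (A-4)]
  have hlin : -(A * (A^3-1) * x) ≤ 0 := by
    have : 0 ≤ A * (A^3-1) * x :=
      mul_nonneg (mul_nonneg hA0.le (by linarith)) hx0.le
    linarith
  have hA16 : 16*A ≤ A^3 := by
    nlinarith [mul_nonneg (mul_nonneg hA0.le (by linarith : (0:ℝ) ≤ A - 4)) (by linarith : (0:ℝ) ≤ A+4)]
  linarith

/-- Let `0 < α < 1/4`, `k` a positive integer with `k ≤ 1/α - 3`, and `a_t` a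
sequence of integers with `1 ≤ a_t ≤ t^α`.  There is `A' > 0` depending only on
`α` and `k` such that for all `t ≥ 1` with `a_t ≥ A'`, the polynomial
`f_t(X) = X^3 + a_t^2(a_t^3-2)X^2 - a_t(a_t^3-1)X + 1 + tX(a_tX-1)` has a real
root `θ` with `0 < θ ≤ a_t^{-k}`. -/
theorem stmt_6 (α : ℝ) (hα : 0 < α) (hα' : α < 1 / 4)
    (k : ℕ) (hk : 1 ≤ k) (hkα : (k : ℝ) ≤ 1 / α - 3)
    (a : ℕ → ℤ) (ha : ∀ t : ℕ, 1 ≤ t → 1 ≤ a t ∧ ((a t : ℝ) ≤ (t : ℝ) ^ α)) :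
    ∃ A' : ℝ, 0 < A' ∧ ∀ t : ℕ, 1 ≤ t → A' ≤ (a t : ℝ) →
      ∃ θ : ℝ, 0 < θ ∧ θ ≤ (a t : ℝ) ^ (-(k : ℤ)) ∧
        θ ^ 3 + (a t : ℝ) ^ 2 * ((a t : ℝ) ^ 3 - 2) * θ ^ 2
          - (a t : ℝ) * ((a t : ℝ) ^ 3 - 1) * θ + 1
          + (t : ℝ) * θ * ((a t : ℝ) * θ - 1) = 0 := by
  refine ⟨4, by norm_num, ?_⟩
  intro t ht hA4
  obtain ⟨ha1, ha2⟩ := ha t ht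
  have hA1 : (1:ℝ) ≤ (a t : ℝ) := by exact_mod_cast ha1
  have hA0 : (0:ℝ) < (a t : ℝ) := by linarith
  have ht0 : (0:ℝ) < (t:ℝ) := by
    have : (1:ℝ) ≤ (t:ℝ) := by exact_mod_cast ht
    linarith
  set A : ℝ := (a t : ℝ) with hAdef
  set T : ℝ := (t : ℝ) with hTdef
  -- T ≥ A^(k+3)
  have hT : A ^ (k+3) ≤ T := by
    have hexp : ((k:ℝ) + 3) ≤ 1/α := by linarith
    have h1 : A ^ (((k:ℝ))+3) ≤ A ^ (1/α) :=
      Real.rpow_le_rpow_of_exponent_le hA1 hexp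
    have h2 : A ^ (1/α) ≤ (T ^ α) ^ (1/α) :=
      Real.rpow_le_rpow hA0.le ha2 (by positivity)
    have h3 : (T ^ α) ^ (1/α) = T := by
      rw [← Real.rpow_mul ht0.le, mul_one_div_cancel hα.ne', Real.rpow_one]
    have h4 : A ^ (k+3) = A ^ (((k:ℝ))+3) := by
      rw [← Real.rpow_natCast A (k+3)]
      push_cast
      ring_nf
    rw [h4]
    calc A ^ (((k:ℝ))+3) ≤ A ^ (1/α) := h1
      _ ≤ (T ^ α) ^ (1/α) := h2
      _ = T := h3
  set B : ℝ := A ^ k with hBdef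
  have hB0 : (0:ℝ) < B := pow_pos hA0 k
  have hTB : A ^ 3 * B ≤ T := by
    have h : A ^ (k+3) = A ^ 3 * B := by rw [hBdef, ← pow_add]; ring
    linarith [h ▸ hT]
  have hT2 : (2:ℝ) ≤ T := by
    have hB1 : (1:ℝ) ≤ B := by simpa using pow_le_pow_left₀ zero_le_one hA1 k
    nlinarith [pow_pos hA0 3, mul_nonneg (by linarith : (0:ℝ) ≤ A - 4) (by positivity : (0:ℝ) ≤ A^2)]
  set s : ℝ := 1 - 1/T with hsdef
  have hs0 : 0 < s := by
    have : 1/T ≤ 1/2 := by rw [div_le_div_iff₀ ht0 (by norm_num)]; linarith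
    simp only [hsdef]; linarith
  have hs1 : s < 1 := by
    have : 0 < 1/T := by positivity
    simp only [hsdef]; linarith
  set x₀ : ℝ := s / B with hxdef
  have hx0 : 0 < x₀ := by positivity
  have hx1 : x₀ < 1 / B := by
    rw [hxdef, div_lt_div_iff₀ hB0 hB0]
    nlinarith
  set g : ℝ → ℝ := fun x => x ^ 3 + A ^ 2 * (A ^ 3 - 2) * x ^ 2
      - A * (A ^ 3 - 1) * x + 1 + T * x * (A * x - 1) with hgdef
  have hg0 : g 0 = 1 := by simp [hgdef]
  have hgx : g x₀ < 0 := by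
    have hgval : g x₀ = x₀^3 + A^2*(A^3-2)*x₀^2 - A*(A^3-1)*x₀ + 1 + T*x₀*(A*x₀-1) := rfl
    rw [hgval]
    rcases eq_or_lt_of_le hk with hk1 | hk2
    · have hBA : B = A := by rw [hBdef, ← hk1, pow_one]
      have hTA4 : A^4 ≤ T := by
        have h : A ^ (k+3) = A ^ 4 := by rw [← hk1]
        linarith [h ▸ hT]
      exact aux1 A T hA4 hTA4 s x₀ hsdef (by rw [hxdef, hBA])
    · have hB2 : A^2 ≤ B := by
        calc A^2 ≤ A^k := pow_le_pow_right₀ hA1 hk2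
          _ = B := rfl
      exact aux2 A B T hA4 hB2 hTB s x₀ hsdef hxdef
  have hcont : ContinuousOn g (Set.Icc 0 x₀) := by
    apply Continuous.continuousOn
    simp only [hgdef]
    fun_prop
  have hmem : (0:ℝ) ∈ Set.Ioo (g x₀) (g 0) := by
    rw [hg0]; exact ⟨hgx, one_pos⟩
  obtain ⟨θ, hθmem, hθ⟩ := intermediate_value_Ioo' hx0.le hcont hmem
  refine ⟨θ, hθmem.1, ?_, hθ⟩
  have hinv : A ^ (-(k:ℤ)) = 1/B := by
    rw [zpow_neg, zpow_natCast, one_div, hBdef]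
  rw [hinv]
  linarith [hθmem.2, hx1]
end
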